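/- Assume s_c ∈ (s₀, ∞) satisfies ∫₀¹ (s_c² − 2Ω(p))^{-3/2} dp = 1, and set R_c = R(s_c) and R₀ = lim_{s→s₀+} R(s) ∈ (R_c, +∞]. Then: (a) for every r with R_c < r < R₀ the equation R(s) = r has exactly two solutions s₋(r) < s_c < s₊(r) in (s₀, ∞), and d(s₊(r)) < d(s₋(r)); (b) if R₀ < ∞, then for every r > R₀ the equation R(s) = r has exactly one solution s₊(r), and it lies in (s_c, ∞). -/

import Mathlib

open MeasureTheory Set Filter

noncomputable section

/-- `Omeg ω p = ∫₀^p ω(t) dt`, the primitive of the vorticity function. -/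
def Omeg (ω : ℝ → ℝ) (p : ℝ) : ℝ := ∫ t in (0:ℝ)..p, ω t

/-- `s0 ω = sqrt (max_{p ∈ [0,1]} 2 Ω(p))`. -/
def s0 (ω : ℝ → ℝ) : ℝ := Real.sqrt (sSup ((fun p => 2 * Omeg ω p) '' Icc (0:ℝ) 1))

/-- `Hp ω p s = (s² − 2Ω(p))^{-1/2}`. -/
def Hp (ω : ℝ → ℝ) (p s : ℝ) : ℝ := (Real.sqrt (s ^ 2 - 2 * Omeg ω p))⁻¹

/-- `Hfun ω p s = H(p; s) = ∫₀^p (s² − 2Ω(τ))^{-1/2} dτ`. -/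
def Hfun (ω : ℝ → ℝ) (p s : ℝ) : ℝ := ∫ τ in (0:ℝ)..p, Hp ω τ s

/-- `dd ω s = d(s) = H(1; s)`. -/
def dd (ω : ℝ → ℝ) (s : ℝ) : ℝ := Hfun ω 1 s

/-- `RR ω s = R(s) = s²/2 − Ω(1) + d(s)`, the Bernoulli constant of the stream solution. -/
def RR (ω : ℝ → ℝ) (s : ℝ) : ℝ := s ^ 2 / 2 - Omeg ω 1 + dd ω s

/-- `sigmaFun ω s r = σ(s; r)`. -/
def sigmaFun (ω : ℝ → ℝ) (s r : ℝ) : ℝ :=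
  ∫ p in (0:ℝ)..1,
    (1 / (2 * (Hp ω p s) ^ 2) - Hfun ω p s - Omeg ω p + Omeg ω 1 + r) * Hp ω p s

/-- Partial derivative in the first (horizontal) variable `q`. -/
def dq (f : ℝ → ℝ → ℝ) (q p : ℝ) : ℝ := deriv (fun x => f x p) q

/-- Partial derivative in the second (vertical) variable `p`. -/
def dp (f : ℝ → ℝ → ℝ) (q p : ℝ) : ℝ := deriv (fun y => f q y) p

/-- The height system with Bernoulli constant `r` on the strip `S = ℝ × [0,1]`. -/
structure HeightSol (ω : ℝ → ℝ) (r : ℝ) (h : ℝ → ℝ → ℝ) : Prop where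
  smooth : ContDiff ℝ 2 (Function.uncurry h)
  hp_pos : ∀ q : ℝ, ∀ p ∈ Icc (0:ℝ) 1, 0 < dp h q p
  pde : ∀ q : ℝ, ∀ p ∈ Icc (0:ℝ) 1,
    (1 + (dq h q p) ^ 2) / (dp h q p) ^ 2 * dp (dp h) q p
      - 2 * (dq h q p) / (dp h q p) * dp (dq h) q p
      + dq (dq h) q p - ω p * dp h q p = 0
  top : ∀ q : ℝ, (1 + (dq h q 1) ^ 2) / (2 * (dp h q 1) ^ 2) + h q 1 = r
  bot : ∀ q : ℝ, h q 0 = 0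

/-- The flow force of a height function `h`, computed on the vertical line through `q`. -/
def flowForce (ω : ℝ → ℝ) (r : ℝ) (h : ℝ → ℝ → ℝ) (q : ℝ) : ℝ :=
  ∫ p in (0:ℝ)..1,
    ((1 - (dq h q p) ^ 2) / (2 * (dp h q p) ^ 2) - h q p - Omeg ω p + Omeg ω 1 + r) * dp h q p

/-- `wfun ω s h = w^{(s)} = h − H(·; s)`. -/
def wfun (ω : ℝ → ℝ) (s : ℝ) (h : ℝ → ℝ → ℝ) (q p : ℝ) : ℝ := h q p - Hfun ω p s

/-- The flow force flux function `Φ^{(s)}`. -/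
def Phi (ω : ℝ → ℝ) (s : ℝ) (h : ℝ → ℝ → ℝ) (q p : ℝ) : ℝ :=
  ∫ p' in (0:ℝ)..p,
    ((dp (wfun ω s h) q p') ^ 2 / (dp h q p' * (Hp ω p' s) ^ 2)
      - (dq (wfun ω s h) q p') ^ 2 / dp h q p')

/-- `h ∈ C^{2,γ}(S̄)`: `h` is twice continuously differentiable, all partial derivatives of
order ≤ 2 are bounded on the strip, and the second-order derivatives are uniformly
γ-Hölder continuous on the strip. -/
def C2Holder (γ : ℝ) (h : ℝ → ℝ → ℝ) : Prop :=
  ContDiff ℝ 2 (Function.uncurry h) ∧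
  (∀ g ∈ ([h, dq h, dp h, dq (dq h), dp (dq h), dp (dp h)] : List (ℝ → ℝ → ℝ)),
    ∃ M : ℝ, ∀ q : ℝ, ∀ p ∈ Icc (0:ℝ) 1, |g q p| ≤ M) ∧
  (∀ g ∈ ([dq (dq h), dp (dq h), dp (dp h)] : List (ℝ → ℝ → ℝ)),
    ∃ C : ℝ, ∀ q q' : ℝ, ∀ p ∈ Icc (0:ℝ) 1, ∀ p' ∈ Icc (0:ℝ) 1,
      |g q p - g q' p'| ≤ C * Real.sqrt ((q - q') ^ 2 + (p - p') ^ 2) ^ γ)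

end

/-!
Differentiating under the integral sign gives `R'(s) = s (1 - I(s))` with
`I(s) = ∫₀¹ (s² − 2Ω(p))^{-3/2} dp`. As `I` is strictly decreasing and `I(s_c) = 1`, `R`
strictly decreases on `(s₀, s_c]` and strictly increases on `[s_c, ∞)`, where it tends to `+∞`
because `R(s) ≥ s²/2 − Ω(1)`. The intermediate value theorem on each branch produces the
solutions and strict monotonicity makes them unique; `d(s₊) < d(s₋)` follows from
`R(s₊) = R(s₋)` and `s₊² > s₋²`. On the decreasing branch `R ≤ R₀`, so for `r > R₀` only the
increasing branch is hit.
-/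

open Topology

section

variable {ω : ℝ → ℝ}

theorem continuous_Omeg (hω : Continuous ω) : Continuous (Omeg ω) :=
  intervalIntegral.continuous_primitive (fun a b => hω.intervalIntegrable a b) 0

theorem s0_nonneg (ω : ℝ → ℝ) : 0 ≤ s0 ω := Real.sqrt_nonneg _

theorem two_mul_Omeg_le_s0_sq (hω : Continuous ω) {p : ℝ} (hp : p ∈ Icc (0:ℝ) 1) :
    2 * Omeg ω p ≤ s0 ω ^ 2 := by
  have hbdd : BddAbove ((fun p => 2 * Omeg ω p) '' Icc (0:ℝ) 1) :=
    (isCompact_Icc.image (continuous_const.mul (continuous_Omeg hω))).bddAbove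
  have hsup_nonneg : 0 ≤ sSup ((fun p => 2 * Omeg ω p) '' Icc (0:ℝ) 1) :=
    le_csSup_of_le hbdd ⟨0, left_mem_Icc.2 zero_le_one, rfl⟩ (by simp [Omeg])
  rw [s0, Real.sq_sqrt hsup_nonneg]
  exact le_csSup hbdd ⟨p, hp, rfl⟩

theorem sq_sub_two_mul_Omeg_pos (hω : Continuous ω) {s p : ℝ} (hs : s0 ω < s)
    (hp : p ∈ Icc (0:ℝ) 1) : 0 < s ^ 2 - 2 * Omeg ω p := by
  have hsq : s0 ω ^ 2 < s ^ 2 := pow_lt_pow_left₀ hs (s0_nonneg ω) two_ne_zero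
  linarith [two_mul_Omeg_le_s0_sq hω hp]

theorem Hp_pos (hω : Continuous ω) {s p : ℝ} (hs : s0 ω < s) (hp : p ∈ Icc (0:ℝ) 1) :
    0 < Hp ω p s :=
  inv_pos.2 (Real.sqrt_pos.2 (sq_sub_two_mul_Omeg_pos hω hs hp))

theorem measurable_Hp (hω : Continuous ω) (s : ℝ) : Measurable (fun p => Hp ω p s) :=
  (Real.continuous_sqrt.comp
    (continuous_const.sub (continuous_const.mul (continuous_Omeg hω)))).measurable.inv

theorem continuousOn_Hp (hω : Continuous ω) {s : ℝ} (hs : s0 ω < s) :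
    ContinuousOn (fun p => Hp ω p s) (Icc (0:ℝ) 1) :=
  (Real.continuous_sqrt.comp
    (continuous_const.sub (continuous_const.mul (continuous_Omeg hω)))).continuousOn.inv₀
    fun _ hp => (Real.sqrt_pos.2 (sq_sub_two_mul_Omeg_pos hω hs hp)).ne'

theorem strictAntiOn_Hp (hω : Continuous ω) {p : ℝ} (hp : p ∈ Icc (0:ℝ) 1) :
    StrictAntiOn (Hp ω p) (Ioi (s0 ω)) := by
  intro s₁ hs₁ s₂ _ h
  have hpos := sq_sub_two_mul_Omeg_pos hω hs₁ hp
  have hsq : s₁ ^ 2 < s₂ ^ 2 :=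
    pow_lt_pow_left₀ h ((s0_nonneg ω).trans (le_of_lt hs₁)) two_ne_zero
  exact inv_strictAnti₀ (Real.sqrt_pos.2 hpos) (Real.sqrt_lt_sqrt hpos.le (by linarith))

theorem hasDerivAt_inv_sqrt_sq_sub {c x : ℝ} (hx : 0 < x ^ 2 - c) :
    HasDerivAt (fun y => (Real.sqrt (y ^ 2 - c))⁻¹)
      (-(x * (Real.sqrt (x ^ 2 - c))⁻¹ ^ 3)) x := by
  have hsqrt : HasDerivAt (fun y => Real.sqrt (y ^ 2 - c))
      (1 / (2 * Real.sqrt (x ^ 2 - c)) * (2 * x)) x :=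
    (Real.hasDerivAt_sqrt hx.ne').comp x (by simpa using (hasDerivAt_pow 2 x).sub_const c)
  refine (hsqrt.inv (Real.sqrt_pos.2 hx).ne').congr_deriv ?_
  field_simp

theorem hasDerivAt_Hp (hω : Continuous ω) {s p : ℝ} (hs : s0 ω < s)
    (hp : p ∈ Icc (0:ℝ) 1) :
    HasDerivAt (Hp ω p) (-(s * Hp ω p s ^ 3)) s :=
  hasDerivAt_inv_sqrt_sq_sub (sq_sub_two_mul_Omeg_pos hω hs hp)

theorem hasDerivAt_dd (hω : Continuous ω) {s : ℝ} (hs : s0 ω < s) :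
    HasDerivAt (dd ω) (-(s * ∫ p in (0:ℝ)..1, Hp ω p s ^ 3)) s := by
  obtain ⟨a, hs0a, has⟩ := exists_between hs
  have hIcc : ∀ p ∈ uIoc (0:ℝ) 1, p ∈ Icc (0:ℝ) 1 := fun p hp =>
    Ioc_subset_Icc_self (by rwa [uIoc_of_le zero_le_one] at hp)
  have hnbhd : Ioo a (s + 1) ∈ 𝓝 s := Ioo_mem_nhds has (lt_add_one s)
  have hbound : ∀ p ∈ uIoc (0:ℝ) 1, ∀ x ∈ Ioo a (s + 1),
      ‖-(x * Hp ω p x ^ 3)‖ ≤ (s + 1) * Hp ω p a ^ 3 := by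
    intro p hp x hx
    have hx0 : 0 < x := (s0_nonneg ω).trans_lt (hs0a.trans hx.1)
    have hHp_pos := Hp_pos hω (hs0a.trans hx.1) (hIcc p hp)
    have hHp_le : Hp ω p x ≤ Hp ω p a :=
      ((strictAntiOn_Hp hω (hIcc p hp)) hs0a (hs0a.trans hx.1) hx.1).le
    rw [norm_neg, Real.norm_of_nonneg (by positivity)]
    exact mul_le_mul hx.2.le (pow_le_pow_left₀ hHp_pos.le hHp_le 3) (by positivity)
      (by linarith [hx.2])
  have hderiv := intervalIntegral.hasDerivAt_integral_of_dominated_loc_of_deriv_le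
    (F := fun x p => Hp ω p x) (F' := fun x p => -(x * Hp ω p x ^ 3)) (μ := volume)
    hnbhd (Eventually.of_forall fun x => (measurable_Hp hω x).aestronglyMeasurable)
    ((continuousOn_Hp hω hs).intervalIntegrable_of_Icc zero_le_one)
    ((((measurable_Hp hω s).pow_const 3).const_mul s).neg.aestronglyMeasurable)
    (Eventually.of_forall hbound)
    ((((continuousOn_Hp hω hs0a).pow 3).intervalIntegrable_of_Icc zero_le_one).const_mul _)
    (Eventually.of_forall fun p hp x hx => hasDerivAt_Hp hω (hs0a.trans hx.1) (hIcc p hp))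
  rw [intervalIntegral.integral_neg, intervalIntegral.integral_const_mul] at hderiv
  exact hderiv.2

theorem hasDerivAt_RR (hω : Continuous ω) {s : ℝ} (hs : s0 ω < s) :
    HasDerivAt (RR ω) (s * (1 - ∫ p in (0:ℝ)..1, Hp ω p s ^ 3)) s := by
  refine ((((hasDerivAt_pow 2 s).div_const 2).sub_const (Omeg ω 1)).add
    (hasDerivAt_dd hω hs)).congr_deriv ?_
  ring

theorem continuousOn_RR (hω : Continuous ω) : ContinuousOn (RR ω) (Ioi (s0 ω)) :=
  fun _ hs => (hasDerivAt_RR hω hs).continuousAt.continuousWithinAt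

theorem strictAntiOn_integral_Hp_pow_three (hω : Continuous ω) :
    StrictAntiOn (fun s => ∫ p in (0:ℝ)..1, Hp ω p s ^ 3) (Ioi (s0 ω)) := by
  intro s₁ hs₁ s₂ hs₂ h
  have hlt : ∀ p ∈ Icc (0:ℝ) 1, Hp ω p s₂ ^ 3 < Hp ω p s₁ ^ 3 := fun p hp =>
    pow_lt_pow_left₀ (strictAntiOn_Hp hω hp hs₁ hs₂ h) (Hp_pos hω hs₂ hp).le three_ne_zero
  exact intervalIntegral.integral_lt_integral_of_continuousOn_of_le_of_exists_lt zero_lt_one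
    ((continuousOn_Hp hω hs₂).pow 3) ((continuousOn_Hp hω hs₁).pow 3)
    (fun p hp => (hlt p (Ioc_subset_Icc_self hp)).le)
    ⟨0, left_mem_Icc.2 zero_le_one, hlt 0 (left_mem_Icc.2 zero_le_one)⟩

theorem dd_pos (hω : Continuous ω) {s : ℝ} (hs : s0 ω < s) : 0 < dd ω s :=
  intervalIntegral.intervalIntegral_pos_of_pos_on
    ((continuousOn_Hp hω hs).intervalIntegrable_of_Icc zero_le_one)
    (fun _ hp => Hp_pos hω hs (Ioo_subset_Icc_self hp)) zero_lt_one

theorem tendsto_RR_atTop (hω : Continuous ω) : Tendsto (RR ω) atTop atTop := by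
  refine tendsto_atTop_mono' atTop (f₁ := fun s => s ^ 2 / 2 - Omeg ω 1) ?_ ?_
  · filter_upwards [eventually_gt_atTop (s0 ω)] with s hs
    linarith [dd_pos hω hs, show RR ω s = s ^ 2 / 2 - Omeg ω 1 + dd ω s from rfl]
  · exact tendsto_atTop_add_const_right _ _
      ((tendsto_pow_atTop two_ne_zero).atTop_div_const two_pos)

theorem dd_lt_dd_of_RR_eq {s₁ s₂ : ℝ} (hs₁ : 0 ≤ s₁) (h : s₁ < s₂)
    (hR : RR ω s₁ = RR ω s₂) : dd ω s₂ < dd ω s₁ := by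
  have hsq : s₁ ^ 2 < s₂ ^ 2 := pow_lt_pow_left₀ h hs₁ two_ne_zero
  simp only [RR] at hR
  linarith

theorem exists_gt_RR_eq (hω : Continuous ω) {t r : ℝ} (ht : s0 ω < t) (hr : RR ω t < r) :
    ∃ s, t < s ∧ RR ω s = r := by
  obtain ⟨b, hbr, htb⟩ :=
    (((tendsto_RR_atTop hω).eventually_gt_atTop r).and (eventually_gt_atTop t)).exists
  obtain ⟨s, hs, hsr⟩ := intermediate_value_Icc htb.le
    ((continuousOn_RR hω).mono fun x hx => ht.trans_le hx.1) ⟨hr.le, hbr.le⟩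
  exact ⟨s, hs.1.lt_of_ne (by rintro rfl; exact hr.ne hsr), hsr⟩

theorem exists_mem_Ioo_RR_eq (hω : Continuous ω) {R0 : EReal}
    (hR0 : Tendsto (fun s => (RR ω s : EReal)) (𝓝[>] (s0 ω)) (𝓝 R0))
    {t r : ℝ} (ht : s0 ω < t) (hr : RR ω t < r) (hrR0 : (r : EReal) < R0) :
    ∃ s ∈ Ioo (s0 ω) t, RR ω s = r := by
  obtain ⟨a, hra, ha⟩ :=
    ((hR0.eventually_const_lt hrR0).and (Ioo_mem_nhdsGT ht)).exists
  obtain ⟨s, hs, hsr⟩ := intermediate_value_Icc' ha.2.le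
    ((continuousOn_RR hω).mono fun x hx => ha.1.trans_le hx.1)
    ⟨hr.le, (EReal.coe_lt_coe_iff.1 hra).le⟩
  exact ⟨s, ⟨ha.1.trans_le hs.1, hs.2.lt_of_ne (by rintro rfl; exact hr.ne hsr)⟩, hsr⟩

section Critical

variable {sc : ℝ}

theorem strictAntiOn_RR (hω : Continuous ω) (hsc : s0 ω < sc)
    (hI : (∫ p in (0:ℝ)..1, Hp ω p sc ^ 3) = 1) : StrictAntiOn (RR ω) (Ioc (s0 ω) sc) := by
  refine strictAntiOn_of_deriv_neg (convex_Ioc _ _)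
    ((continuousOn_RR hω).mono Ioc_subset_Ioi_self) fun s hs => ?_
  rw [interior_Ioc] at hs
  have hI_gt : 1 < ∫ p in (0:ℝ)..1, Hp ω p s ^ 3 := by
    simpa only [hI] using strictAntiOn_integral_Hp_pow_three hω hs.1 hsc hs.2
  rw [(hasDerivAt_RR hω hs.1).deriv]
  exact mul_neg_of_pos_of_neg ((s0_nonneg ω).trans_lt hs.1) (by linarith)

theorem strictMonoOn_RR (hω : Continuous ω) (hsc : s0 ω < sc)
    (hI : (∫ p in (0:ℝ)..1, Hp ω p sc ^ 3) = 1) : StrictMonoOn (RR ω) (Ici sc) := by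
  refine strictMonoOn_of_deriv_pos (convex_Ici sc)
    ((continuousOn_RR hω).mono fun _ hs => hsc.trans_le hs) fun s hs => ?_
  rw [interior_Ici] at hs
  have hI_lt : (∫ p in (0:ℝ)..1, Hp ω p s ^ 3) < 1 := by
    simpa only [hI] using strictAntiOn_integral_Hp_pow_three hω hsc (hsc.trans hs) hs
  rw [(hasDerivAt_RR hω (hsc.trans hs)).deriv]
  exact mul_pos ((s0_nonneg ω).trans_lt (hsc.trans hs)) (by linarith)

theorem RR_le_of_tendsto (hω : Continuous ω) (hsc : s0 ω < sc)
    (hI : (∫ p in (0:ℝ)..1, Hp ω p sc ^ 3) = 1) {R0 : EReal}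
    (hR0 : Tendsto (fun s => (RR ω s : EReal)) (𝓝[>] (s0 ω)) (𝓝 R0))
    {s : ℝ} (hs : s ∈ Ioc (s0 ω) sc) : (RR ω s : EReal) ≤ R0 := by
  refine ge_of_tendsto hR0 ?_
  filter_upwards [Ioo_mem_nhdsGT hs.1] with t ht
  exact EReal.coe_le_coe_iff.2
    (strictAntiOn_RR hω hsc hI ⟨ht.1, ht.2.le.trans hs.2⟩ hs ht.2).le

end Critical

end

theorem stmt6_general (ω : ℝ → ℝ) (hω : Continuous ω)
    (sc : ℝ) (hsc : sc ∈ Ioi (s0 ω))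
    (hI : (∫ p in (0:ℝ)..1, (Hp ω p sc) ^ 3) = 1)
    (R0 : EReal)
    (hR0 : Tendsto (fun s => (RR ω s : EReal)) (nhdsWithin (s0 ω) (Ioi (s0 ω))) (nhds R0)) :
    (∀ r : ℝ, RR ω sc < r → (r : EReal) < R0 →
      ∃ sm sp : ℝ, sm ∈ Ioi (s0 ω) ∧ sp ∈ Ioi (s0 ω) ∧ sm < sc ∧ sc < sp ∧
        RR ω sm = r ∧ RR ω sp = r ∧ dd ω sp < dd ω sm ∧
        (∀ s ∈ Ioi (s0 ω), RR ω s = r → s = sm ∨ s = sp)) ∧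
    (R0 ≠ ⊤ → ∀ r : ℝ, R0 < (r : EReal) →
      ∃ sp : ℝ, sp ∈ Ioi sc ∧ RR ω sp = r ∧
        (∀ s ∈ Ioi (s0 ω), RR ω s = r → s = sp)) := by
  have hanti := strictAntiOn_RR hω hsc hI
  have hmono := strictMonoOn_RR hω hsc hI
  constructor
  · intro r hr hrR0
    obtain ⟨sm, ⟨hsm0, hsmc⟩, hsmr⟩ := exists_mem_Ioo_RR_eq hω hR0 hsc hr hrR0
    obtain ⟨sp, hscp, hspr⟩ := exists_gt_RR_eq hω hsc hr
    refine ⟨sm, sp, hsm0, hsc.trans hscp, hsmc, hscp, hsmr, hspr,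
      dd_lt_dd_of_RR_eq ((s0_nonneg ω).trans hsm0.le) (hsmc.trans hscp) (hsmr.trans hspr.symm),
      fun s hs hsr => ?_⟩
    rcases le_total s sc with hs_le | hs_ge
    · exact .inl (hanti.injOn ⟨hs, hs_le⟩ ⟨hsm0, hsmc.le⟩ (hsr.trans hsmr.symm))
    · exact .inr (hmono.injOn hs_ge hscp.le (hsr.trans hspr.symm))
  · intro _ r hR0r
    have hlt : ∀ s ∈ Ioc (s0 ω) sc, RR ω s < r := fun s hs =>
      EReal.coe_lt_coe_iff.1 ((RR_le_of_tendsto hω hsc hI hR0 hs).trans_lt hR0r)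
    obtain ⟨sp, hscp, hspr⟩ := exists_gt_RR_eq hω hsc (hlt sc ⟨hsc, le_rfl⟩)
    refine ⟨sp, hscp, hspr, fun s hs hsr => ?_⟩
    rcases le_total s sc with hs_le | hs_ge
    · exact absurd hsr (hlt s ⟨hs, hs_le⟩).ne
    · exact hmono.injOn hs_ge hscp.le (hsr.trans hspr.symm)

/-- with `s_c` critical, `R_c = R(s_c)` and `R₀ = lim_{s→s₀+} R(s) ∈ (R_c, +∞]`:
(a) for `R_c < r < R₀` the equation `R(s) = r` has exactly two solutions
`s₋(r) < s_c < s₊(r)` in `(s₀, ∞)`, and `d(s₊(r)) < d(s₋(r))`;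
(b) if `R₀ < ∞`, then for every `r > R₀` there is exactly one solution, lying in `(s_c, ∞)`. -/
theorem stmt6 (ω : ℝ → ℝ) (hω : Continuous ω)
    (sc : ℝ) (hsc : sc ∈ Ioi (s0 ω))
    (hI : (∫ p in (0:ℝ)..1, (Hp ω p sc) ^ 3) = 1)
    (R0 : EReal)
    (hR0 : Tendsto (fun s => (RR ω s : EReal)) (nhdsWithin (s0 ω) (Ioi (s0 ω))) (nhds R0))
    (hRcR0 : (RR ω sc : EReal) < R0) :
    (∀ r : ℝ, RR ω sc < r → (r : EReal) < R0 →
      ∃ sm sp : ℝ, sm ∈ Ioi (s0 ω) ∧ sp ∈ Ioi (s0 ω) ∧ sm < sc ∧ sc < sp ∧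
        RR ω sm = r ∧ RR ω sp = r ∧ dd ω sp < dd ω sm ∧
        (∀ s ∈ Ioi (s0 ω), RR ω s = r → s = sm ∨ s = sp)) ∧
    (R0 ≠ ⊤ → ∀ r : ℝ, R0 < (r : EReal) →
      ∃ sp : ℝ, sp ∈ Ioi sc ∧ RR ω sp = r ∧
        (∀ s ∈ Ioi (s0 ω), RR ω s = r → s = sp)) :=
  stmt6_general ω hω sc hsc hI R0 hR0
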